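/- arXiv:1709.05052 — 3 statements merged into one kernel-verified Lean document; each statement's English description precedes it below -/
import Mathlib

section
/- Let f be a minimum-weight Roman dominating function on a graph G with ∅ ≠ V_1^f ⊊ V(G). Then for each nonempty subset S ⊆ V_1^f, the restriction of f to G − S is a Roman dominating function on G − S of weight γ_R(G) − |S|, and γ_R(G − S) = γ_R(G) − |S|. -/
def IsRDF {V : Type*} (G : SimpleGraph V) (f : V → ℕ) : Prop :=
  (∀ v, f v ≤ 2) ∧ ∀ v, f v = 0 → ∃ u, G.Adj v u ∧ f u = 2

noncomputable def gammaR {V : Type*} [Fintype V] (G : SimpleGraph V) : ℕ :=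
  sInf {w | ∃ f, IsRDF G f ∧ ∑ v, f v = w}

def IsMinRDF {V : Type*} [Fintype V] (G : SimpleGraph V) (f : V → ℕ) : Prop :=
  IsRDF G f ∧ ∑ v, f v = gammaR G

noncomputable instance myInstSetFintype {V : Type*} [Fintype V] (s : Set V) : Fintype s :=
  s.toFinite.fintype

lemma gammaR_le {V : Type*} [Fintype V] (G : SimpleGraph V) (f : V → ℕ) (hf : IsRDF G f) :
    gammaR G ≤ ∑ v, f v := Nat.sInf_le ⟨f, hf, rfl⟩

lemma sum_subtype_eq_compl {V : Type*} [Fintype V] [DecidableEq V] (S : Finset V) (f : V → ℕ) :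
    (∑ u : {u | u ∉ S}, f u.1) = ∑ v ∈ Sᶜ, f v := by
  rw [Finset.sum_set_coe]
  apply Finset.sum_congr _ (fun _ _ => rfl)
  ext v
  simp

theorem gammaR_remove_ones {V : Type*} [Fintype V] [DecidableEq V] (G : SimpleGraph V)
    (f : V → ℕ) (hf : IsMinRDF G f)
    (h1 : {v | f v = 1}.Nonempty) (h2 : {v | f v = 1} ≠ Set.univ)
    (S : Finset V) (hS : S.Nonempty) (hS1 : ∀ v ∈ S, f v = 1) :
    IsRDF (G.induce {u | u ∉ S}) (fun u => f u.1) ∧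
    (∑ u : {u | u ∉ S}, f u.1) = gammaR G - S.card ∧
    gammaR (G.induce {u | u ∉ S}) = gammaR G - S.card := by
  obtain ⟨⟨hle, hdom⟩, hsum⟩ := hf
  -- restriction is RDF
  have hrdf : IsRDF (G.induce {u | u ∉ S}) (fun u => f u.1) := by
    constructor
    · intro v; exact hle v.1
    · intro v hv
      obtain ⟨u, hu, hu2⟩ := hdom v.1 hv
      have huS : u ∉ S := fun h => by simp [hS1 u h] at hu2
      exact ⟨⟨u, huS⟩, hu, hu2⟩
  -- card bound
  have hcard : ∑ v ∈ S, f v = S.card := by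
    rw [Finset.sum_congr rfl hS1]; simp
  have hsplit : ∑ v ∈ S, f v + ∑ v ∈ Sᶜ, f v = ∑ v, f v := Finset.sum_add_sum_compl S f
  have hSle : S.card ≤ gammaR G := by
    rw [← hsum, ← hsplit, hcard]; omega
  have hsum2 : (∑ u : {u | u ∉ S}, f u.1) = gammaR G - S.card := by
    rw [sum_subtype_eq_compl]; omega
  refine ⟨hrdf, hsum2, le_antisymm ?_ ?_⟩
  · rw [← hsum2]; exact gammaR_le _ _ hrdf
  · -- γR G - |S| ≤ γR (G - S): any RDF g on G-S extends
    have hne : {w | ∃ g, IsRDF (G.induce {u | u ∉ S}) g ∧ ∑ v, g v = w}.Nonempty :=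
      ⟨_, fun _ => 2, ⟨fun _ => le_rfl, fun v h => by simp at h⟩, rfl⟩
    apply le_csInf hne
    rintro w ⟨g, ⟨gle, gdom⟩, rfl⟩
    set g' : V → ℕ := fun v => if h : v ∈ S then 1 else g ⟨v, h⟩ with hg'
    have hg'rdf : IsRDF G g' := by
      constructor
      · intro v; by_cases h : v ∈ S
        · simp [hg', h]
        · simpa [hg', h] using gle ⟨v, h⟩
      · intro v hv
        by_cases h : v ∈ S
        · simp [hg', h] at hv
        · simp only [hg', dif_neg h] at hv
          obtain ⟨u, hu, hu2⟩ := gdom ⟨v, h⟩ hv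
          refine ⟨u.1, hu, ?_⟩
          have h2 : (u : V) ∉ S := u.2
          simp [hg', h2, hu2]
    have hcompl : ∑ u : {u | u ∉ S}, g u = ∑ v ∈ Sᶜ, g' v := by
      rw [← sum_subtype_eq_compl S g']
      apply Finset.sum_congr rfl
      intro u _
      have h2 : (u : V) ∉ S := u.2
      simp [hg', h2]
    have hcS : ∑ v ∈ S, g' v = S.card := by
      have h3 : ∀ v ∈ S, g' v = 1 := fun v hv => by simp [hg', hv]
      rw [Finset.sum_congr rfl h3]; simp
    have hg'sum : ∑ v, g' v = S.card + ∑ u : {u | u ∉ S}, g u := by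
      rw [← Finset.sum_add_sum_compl S g', hcS, hcompl]
    have := gammaR_le G g' hg'rdf
    omega
end

section
/- If n ≡ 0 (mod 3), then the path P_n has exactly one minimum-weight Roman dominating function, namely the one assigning 2 to each vertex x_i with i ≡ 1 (mod 3) and 0 to all other vertices (vertices indexed x_0,…,x_{n−1}). -/
/-!
Double count the edges between `0`-labelled and `2`-labelled vertices: every `0` has a `2`-neighbour
and every `2` has at most `Δ` neighbours, so `#V₀ ≤ Δ · #V₂`. With `n = #V₀ + #V₁ + #V₂` and weight
`#V₁ + 2 · #V₂` this gives `(Δ + 1) · weight ≥ 2n`, i.e. `3 · weight ≥ 2n` on a path, which the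
pattern attains. At equality there are no `1`s, every `0` has exactly one `2`-neighbour and every
`2` has degree two with both neighbours `0`; reading the path from `x₀` these constraints leave no
choice.
-/

open Finset SimpleGraph

section General

theorem isRDF_const_two {V : Type*} (G : SimpleGraph V) : IsRDF G (fun _ => 2) :=
  ⟨fun _ => le_rfl, fun _ h => absurd h two_ne_zero⟩

variable {V : Type*} [Fintype V] {G : SimpleGraph V} {f : V → ℕ}

theorem gammaR_le_sum (hf : IsRDF G f) : gammaR G ≤ ∑ v, f v :=
  Nat.sInf_le ⟨f, hf, rfl⟩

theorem exists_isMinRDF (G : SimpleGraph V) : ∃ f, IsMinRDF G f :=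
  Nat.sInf_mem (s := {w | ∃ f, IsRDF G f ∧ ∑ v, f v = w}) ⟨_, _, isRDF_const_two G, rfl⟩

theorem card_add_card_add_card_eq (hf : ∀ v, f v ≤ 2) :
    #{v | f v = 0} + #{v | f v = 1} + #{v | f v = 2} = Fintype.card V := by
  rw [card_filter, card_filter, card_filter, ← sum_add_distrib, ← sum_add_distrib, ← card_univ,
    card_eq_sum_ones]
  refine sum_congr rfl fun v _ => ?_
  have := hf v
  interval_cases f v <;> rfl

theorem sum_eq_card_add_two_mul_card (hf : ∀ v, f v ≤ 2) :
    ∑ v, f v = #{v | f v = 1} + 2 * #{v | f v = 2} := by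
  rw [card_filter, card_filter, mul_sum, ← sum_add_distrib]
  refine sum_congr rfl fun v _ => ?_
  have := hf v
  interval_cases f v <;> rfl

variable [DecidableRel G.Adj] {d : ℕ}

theorem IsRDF.one_le_card_filter_adj (hf : IsRDF G f) {v : V} (hv : f v = 0) :
    1 ≤ #{u ∈ {u | f u = 2} | G.Adj v u} := by
  obtain ⟨u, huv, hu⟩ := hf.2 v hv
  exact one_le_card.2 ⟨u, by simp [hu, huv]⟩

theorem IsRDF.card_zero_le_sum (hf : IsRDF G f) :
    #{v | f v = 0} ≤ ∑ u ∈ {u | f u = 2}, #{v ∈ {v | f v = 0} | G.Adj v u} := by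
  calc #{v | f v = 0} = ∑ v ∈ {v | f v = 0}, 1 := card_eq_sum_ones _
    _ ≤ ∑ v ∈ {v | f v = 0}, #{u ∈ {u | f u = 2} | G.Adj v u} := sum_le_sum fun v hv =>
        hf.one_le_card_filter_adj (mem_filter.1 hv).2
    _ = _ := sum_card_bipartiteAbove_eq_sum_card_bipartiteBelow G.Adj

theorem filter_adj_subset_neighborFinset (s : Finset V) (u : V) :
    {v ∈ s | G.Adj v u} ⊆ G.neighborFinset u :=
  fun v hv => by simpa [adj_comm] using (mem_filter.1 hv).2

theorem card_filter_adj_le_degree (s : Finset V) (u : V) :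
    #{v ∈ s | G.Adj v u} ≤ G.degree u :=
  card_neighborFinset_eq_degree G u ▸ card_le_card (filter_adj_subset_neighborFinset s u)

theorem sum_card_filter_adj_le (hd : ∀ v, G.degree v ≤ d) (s t : Finset V) :
    ∑ u ∈ t, #{v ∈ s | G.Adj v u} ≤ d * #t := by
  rw [mul_comm, ← smul_eq_mul, ← sum_const]
  exact sum_le_sum fun u _ => (card_filter_adj_le_degree s u).trans (hd u)

theorem IsRDF.card_zero_le (hf : IsRDF G f) (hd : ∀ v, G.degree v ≤ d) :
    #{v | f v = 0} ≤ d * #{v | f v = 2} :=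
  hf.card_zero_le_sum.trans (sum_card_filter_adj_le hd _ _)

theorem IsRDF.two_mul_card_le (hf : IsRDF G f) (hd : ∀ v, G.degree v ≤ d) (hd1 : 1 ≤ d) :
    2 * Fintype.card V ≤ (d + 1) * ∑ v, f v := by
  rw [← card_add_card_add_card_eq hf.1, sum_eq_card_add_two_mul_card hf.1]
  nlinarith [hf.card_zero_le hd]

theorem two_mul_card_le_mul_gammaR (hd : ∀ v, G.degree v ≤ d) (hd1 : 1 ≤ d) :
    2 * Fintype.card V ≤ (d + 1) * gammaR G := by
  obtain ⟨f, hf, hsum⟩ := exists_isMinRDF G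
  exact hsum ▸ hf.two_mul_card_le hd hd1

theorem IsRDF.forall_ne_one_and_card_zero_eq (hf : IsRDF G f) (hd : ∀ v, G.degree v ≤ d)
    (hd2 : 2 ≤ d) (h : (d + 1) * ∑ v, f v = 2 * Fintype.card V) :
    (∀ v, f v ≠ 1) ∧ #{v | f v = 0} = d * #{v | f v = 2} := by
  rw [← card_add_card_add_card_eq hf.1, sum_eq_card_add_two_mul_card hf.1] at h
  have := hf.card_zero_le hd
  have h1 : #{v | f v = 1} = 0 := by nlinarith
  exact ⟨fun v hv => filter_eq_empty_iff.1 (card_eq_zero.1 h1) (mem_univ v) hv, by nlinarith⟩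

section Tight

variable (hf : IsRDF G f) (hd : ∀ v, G.degree v ≤ d)
  (hcard : #{v | f v = 0} = d * #{v | f v = 2})
include hf hd hcard

theorem IsRDF.card_filter_adj_eq_one_of_card_zero_eq {v : V} (hv : f v = 0) :
    #{u ∈ {u | f u = 2} | G.Adj v u} = 1 := by
  have hle : ∀ v ∈ ({v | f v = 0} : Finset V), 1 ≤ #{u ∈ {u | f u = 2} | G.Adj v u} :=
    fun v hv => hf.one_le_card_filter_adj (mem_filter.1 hv).2
  refine ((sum_eq_sum_iff_of_le hle).1 (le_antisymm (sum_le_sum hle) ?_) v (by simpa)).symm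
  calc _ = ∑ u ∈ {u | f u = 2}, #{v ∈ {v | f v = 0} | G.Adj v u} :=
        sum_card_bipartiteAbove_eq_sum_card_bipartiteBelow G.Adj
    _ ≤ d * #{v | f v = 2} := sum_card_filter_adj_le hd _ _
    _ = _ := by rw [← hcard, card_eq_sum_ones]

theorem IsRDF.card_filter_adj_eq_of_card_zero_eq {u : V} (hu : f u = 2) :
    #{v ∈ {v | f v = 0} | G.Adj v u} = d := by
  have hle : ∀ u ∈ ({u | f u = 2} : Finset V), #{v ∈ {v | f v = 0} | G.Adj v u} ≤ d :=
    fun u _ => (card_filter_adj_le_degree _ u).trans (hd u)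
  refine (sum_eq_sum_iff_of_le hle).1 (le_antisymm (sum_le_sum hle) ?_) u (by simpa)
  rw [sum_const, smul_eq_mul, mul_comm, ← hcard]
  exact hf.card_zero_le_sum

theorem IsRDF.eq_of_adj_of_card_zero_eq {v u u' : V} (hv : f v = 0) (hu : G.Adj v u)
    (hu' : G.Adj v u') (hu2 : f u = 2) (hu2' : f u' = 2) : u = u' :=
  card_le_one.1 (hf.card_filter_adj_eq_one_of_card_zero_eq hd hcard hv).le u (by simp [hu, hu2])
    u' (by simp [hu', hu2'])

theorem IsRDF.filter_adj_eq_neighborFinset_of_card_zero_eq {u : V} (hu : f u = 2) :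
    ({v ∈ {v | f v = 0} | G.Adj v u} : Finset V) = G.neighborFinset u :=
  eq_of_subset_of_card_le (filter_adj_subset_neighborFinset _ u) <| by
    rw [card_neighborFinset_eq_degree, hf.card_filter_adj_eq_of_card_zero_eq hd hcard hu]
    exact hd u

theorem IsRDF.degree_eq_of_card_zero_eq {u : V} (hu : f u = 2) : G.degree u = d := by
  rw [← card_neighborFinset_eq_degree,
    ← hf.filter_adj_eq_neighborFinset_of_card_zero_eq hd hcard hu,
    hf.card_filter_adj_eq_of_card_zero_eq hd hcard hu]

theorem IsRDF.eq_zero_of_adj_of_card_zero_eq {u v : V} (hu : f u = 2) (huv : G.Adj u v) :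
    f v = 0 := by
  have hv : v ∈ ({v ∈ {v | f v = 0} | G.Adj v u} : Finset V) := by
    rw [hf.filter_adj_eq_neighborFinset_of_card_zero_eq hd hcard hu, mem_neighborFinset]
    exact huv
  simpa using (mem_filter.1 hv).1

end Tight

end General

section Path

variable {n : ℕ}

instance : DecidableRel (pathGraph n).Adj := fun _ _ => decidable_of_iff' _ pathGraph_adj

theorem neighborFinset_pathGraph (v : Fin n) :
    (pathGraph n).neighborFinset v =
      ({u | u.val + 1 = v.val} : Finset (Fin n)) ∪ ({u | v.val + 1 = u.val} : Finset (Fin n)) := by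
  ext u
  simp [pathGraph_adj, or_comm]

theorem degree_pathGraph_le_two (v : Fin n) : (pathGraph n).degree v ≤ 2 := by
  rw [← card_neighborFinset_eq_degree, neighborFinset_pathGraph]
  refine (card_union_le _ _).trans (Nat.add_le_add (b := 1) (d := 1) ?_ ?_) <;>
    exact card_le_one.2 fun a ha b hb => Fin.ext <| by simp at ha hb; omega

theorem degree_pathGraph_le_one_of_val_eq_zero {v : Fin n} (hv : v.val = 0) :
    (pathGraph n).degree v ≤ 1 := by
  rw [← card_neighborFinset_eq_degree, neighborFinset_pathGraph]
  refine (card_union_le _ _).trans ?_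
  rw [filter_false_of_mem fun u _ => by omega, card_empty, zero_add]
  exact card_le_one.2 fun a ha b hb => Fin.ext <| by simp at ha hb; omega

def pathPattern (n : ℕ) : Fin n → ℕ := fun i => if i.val % 3 = 1 then 2 else 0

theorem isRDF_pathPattern (hn : n % 3 = 0) : IsRDF (pathGraph n) (pathPattern n) := by
  refine ⟨fun v => by unfold pathPattern; split <;> omega, fun v hv => ?_⟩
  have hv : v.val % 3 ≠ 1 := by simpa [pathPattern] using hv
  have := v.isLt
  rcases (by omega : v.val % 3 = 0 ∨ v.val % 3 = 2) with h | h
  · exact ⟨⟨v + 1, by omega⟩, by simp [pathGraph_adj], by simp [pathPattern]; omega⟩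
  · exact ⟨⟨v - 1, by omega⟩, by simp [pathGraph_adj]; omega, by simp [pathPattern]; omega⟩

theorem sum_pathPattern (hn : n % 3 = 0) : ∑ i, pathPattern n i = 2 * (n / 3) := by
  obtain ⟨m, rfl⟩ : 3 ∣ n := Nat.dvd_of_mod_eq_zero hn
  unfold pathPattern
  rw [Fin.sum_univ_eq_sum_range (fun i => if i % 3 = 1 then 2 else 0)]
  induction m with
  | zero => simp
  | succ m ih =>
    simp [Nat.mul_succ, sum_range_succ, ih]

theorem IsRDF.eq_pathPattern_of_tight {f : Fin n → ℕ} (hf : IsRDF (pathGraph n) f)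
    (hf1 : ∀ v, f v ≠ 1)
    (hzero : ∀ v u u', f v = 0 → (pathGraph n).Adj v u → (pathGraph n).Adj v u' →
      f u = 2 → f u' = 2 → u = u')
    (hdeg : ∀ u, f u = 2 → (pathGraph n).degree u = 2)
    (htwo : ∀ u v, f u = 2 → (pathGraph n).Adj u v → f v = 0) :
    f = pathPattern n := by
  funext ⟨i, hi⟩
  induction i using Nat.strong_induction_on with
  | _ i ih =>
  have ih' : ∀ j (hj : j < i), f ⟨j, by omega⟩ = if j % 3 = 1 then 2 else 0 :=
    fun j hj => ih j hj _
  have h02 : f ⟨i, hi⟩ = 0 ∨ f ⟨i, hi⟩ = 2 := by have := hf.1 ⟨i, hi⟩; have := hf1 ⟨i, hi⟩; omega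
  simp only [pathPattern]
  rcases (by omega : i % 3 = 0 ∨ i % 3 = 1 ∨ i % 3 = 2) with h | h | h
  · rw [if_neg (by omega)]
    refine h02.resolve_right fun h2 => ?_
    rcases Nat.eq_zero_or_pos i with rfl | hpos
    · have := degree_pathGraph_le_one_of_val_eq_zero (v := ⟨0, hi⟩) rfl
      rw [hdeg _ h2] at this
      omega
    · -- the `0` at `i - 1` would have the two `2`-neighbours `i - 2` and `i`
      have := hzero ⟨i - 1, by omega⟩ ⟨i - 2, by omega⟩ ⟨i, hi⟩
        (by rw [ih' _ (by omega)]; simp; omega) (by simp [pathGraph_adj]; omega)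
        (by simp [pathGraph_adj]; omega) (by rw [ih' _ (by omega)]; simp; omega) h2
      simp at this
      omega
  · rw [if_pos h]
    obtain ⟨⟨u, hu⟩, hadj, hu2⟩ := hf.2 ⟨i - 1, by omega⟩ (by rw [ih' _ (by omega)]; simp; omega)
    rcases pathGraph_adj.1 hadj with hu' | hu' <;> simp only at hu'
    · obtain rfl : u = i := by omega
      exact hu2
    · rw [ih' u (by omega), if_neg (by omega)] at hu2
      exact absurd hu2 two_ne_zero.symm
  · rw [if_neg (by omega)]
    exact htwo ⟨i - 1, by omega⟩ _ (by rw [ih' _ (by omega)]; simp; omega)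
      (by simp [pathGraph_adj]; omega)

theorem IsRDF.eq_pathPattern_of_three_mul_sum_eq {f : Fin n → ℕ} (hf : IsRDF (pathGraph n) f)
    (h : 3 * ∑ v, f v = 2 * n) : f = pathPattern n := by
  have hd := degree_pathGraph_le_two (n := n)
  obtain ⟨hf1, hcard⟩ := hf.forall_ne_one_and_card_zero_eq hd le_rfl (by simpa using h)
  exact hf.eq_pathPattern_of_tight hf1 (fun _ _ _ => hf.eq_of_adj_of_card_zero_eq hd hcard)
    (fun _ => hf.degree_eq_of_card_zero_eq hd hcard)
    (fun _ _ => hf.eq_zero_of_adj_of_card_zero_eq hd hcard)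

end Path

theorem path_unique_minRDF (n : ℕ) (hn : n % 3 = 0) :
    IsMinRDF (SimpleGraph.pathGraph n)
      (fun i : Fin n => if (i : ℕ) % 3 = 1 then 2 else 0) ∧
    ∀ f, IsMinRDF (SimpleGraph.pathGraph n) f →
      f = (fun i : Fin n => if (i : ℕ) % 3 = 1 then 2 else 0) := by
  have hγ : gammaR (pathGraph n) = 2 * (n / 3) := by
    have hlow := two_mul_card_le_mul_gammaR (G := pathGraph n) degree_pathGraph_le_two one_le_two
    have hup := (gammaR_le_sum (isRDF_pathPattern hn)).trans_eq (sum_pathPattern hn)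
    rw [Fintype.card_fin] at hlow
    omega
  refine ⟨⟨isRDF_pathPattern hn, (sum_pathPattern hn).trans hγ.symm⟩, fun f hf => ?_⟩
  exact hf.1.eq_pathPattern_of_three_mul_sum_eq (by rw [hf.2, hγ]; omega)
end

section
/- If n ≡ 2 (mod 3), then the number of minimum-weight Roman dominating functions on the path P_n equals (n+4)(n+7)/18. -/
/-!
Read a labelling of a path from left to right. Whether it is Roman dominating depends on the part
already read only through one label `a ∈ {0, 1, 2}` standing for the last vertex read: `0` for a
`0` still waiting for a `2` on its right, `1` for a vertex that neither needs nor gives anything,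
`2` for a `2`. So it suffices to study the labellings `g` of `P_L` for which the labelling `a, g`
of `P_{L+1}` is Roman dominating, and reading one more label is a three-state recursion. By
induction on `L` their minimum weight is `(2L + 4 - 2a) / 3`, and the number of minimisers is
periodic-polynomial in `L`; for `a = 1` and `n = 3k + 2` it is `C(k + 3, 2) = (n + 4)(n + 7) / 18`.
-/

open SimpleGraph Finset

lemma SimpleGraph.pathGraph_adj_succ_succ {n : ℕ} {i j : Fin n} :
    (pathGraph (n + 1)).Adj i.succ j.succ ↔ (pathGraph n).Adj i j := by
  simp [pathGraph_adj]

lemma Finset.card_filter_add_eq_ite {ι : Type*} {s : Finset ι} {w : ι → ℕ} {m c x M : ℕ}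
    (hm : ∀ i ∈ s, m ≤ w i) (hc : #{i ∈ s | w i = m} = c) (hM : M ≤ x + m) :
    #{i ∈ s | x + w i = M} = if x + m = M then c else 0 := by
  split_ifs with h
  · subst h
    simpa only [Nat.add_left_cancel_iff] using hc
  · rw [card_eq_zero, filter_eq_empty_iff]
    intro i hi
    have := hm i hi
    omega

namespace PathRDF

/-- A `0` whose left neighbour is a `2` is already dominated, so towards the right it behaves
like a `1`. -/
def nextLabel (a x : ℕ) : ℕ := if a = 2 ∧ x = 0 then 1 else x

lemma nextLabel_le_two_iff {a x : ℕ} : nextLabel a x ≤ 2 ↔ x ≤ 2 := by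
  unfold nextLabel
  split_ifs <;> omega

lemma isRDF_cons_cons {n : ℕ} (a x : ℕ) (g : Fin n → ℕ) :
    IsRDF (pathGraph (n + 2)) (Fin.cons a (Fin.cons x g)) ↔
      a ≤ 2 ∧ (a = 0 → x = 2) ∧ IsRDF (pathGraph (n + 1)) (Fin.cons (nextLabel a x) g) := by
  simp only [IsRDF, nextLabel, Fin.forall_fin_succ, Fin.exists_fin_succ, Fin.cons_zero,
    Fin.cons_succ, pathGraph_adj_succ_succ]
  split_ifs with h
  · obtain ⟨rfl, rfl⟩ := h
    simp [pathGraph_adj]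
  · simp [pathGraph_adj]
    grind

lemma isRDF_cons_one {n : ℕ} (f : Fin n → ℕ) :
    IsRDF (pathGraph (n + 1)) (Fin.cons 1 f) ↔ IsRDF (pathGraph n) f := by
  simp [IsRDF, Fin.forall_fin_succ, Fin.exists_fin_succ, pathGraph_adj_succ_succ]

lemma isRDF_pathGraph_one (a : ℕ) (g : Fin 0 → ℕ) :
    IsRDF (pathGraph 1) (Fin.cons a g) ↔ a = 1 ∨ a = 2 := by
  simp [IsRDF, Fin.forall_fin_succ, Fin.exists_fin_succ]
  omega

open Classical in
noncomputable def tails (a L : ℕ) : Finset (Fin L → ℕ) :=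
  {g ∈ Fintype.piFinset fun _ => range 3 | IsRDF (pathGraph (L + 1)) (Fin.cons a g)}

lemma mem_tails {a L : ℕ} {g : Fin L → ℕ} :
    g ∈ tails a L ↔ IsRDF (pathGraph (L + 1)) (Fin.cons a g) := by
  simp only [tails, mem_filter, Fintype.mem_piFinset, mem_range, and_iff_right_iff_imp]
  intro h i
  simpa [Nat.lt_succ_iff] using h.1 i.succ

lemma le_two_of_mem_tails {a L : ℕ} {g : Fin L → ℕ} (hg : g ∈ tails a L) : a ≤ 2 := by
  simpa using (mem_tails.1 hg).1 0

lemma mem_tails_one {n : ℕ} {f : Fin n → ℕ} : f ∈ tails 1 n ↔ IsRDF (pathGraph n) f := by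
  rw [mem_tails, isRDF_cons_one]

lemma tails_zero (a : ℕ) : tails a 0 = if a = 1 ∨ a = 2 then {Fin.elim0} else ∅ := by
  ext g
  rw [mem_tails, isRDF_pathGraph_one, Subsingleton.elim g Fin.elim0]
  split_ifs <;> simp_all

lemma cons_mem_tails {a x L : ℕ} {g : Fin L → ℕ} :
    Fin.cons x g ∈ tails a (L + 1) ↔ a ≤ 2 ∧ (a = 0 → x = 2) ∧ g ∈ tails (nextLabel a x) L := by
  rw [mem_tails, mem_tails, isRDF_cons_cons]

lemma card_filter_tails_succ {a L : ℕ} (ha : a ≤ 2) (M : ℕ) :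
    #{g ∈ tails a (L + 1) | ∑ i, g i = M} =
      ∑ x ∈ range 3 with (a = 0 → x = 2), #{g ∈ tails (nextLabel a x) L | x + ∑ i, g i = M} := by
  classical
  rw [card_eq_sum_card_fiberwise (f := fun g => g 0) (t := {x ∈ range 3 | a = 0 → x = 2})]
  · refine sum_congr rfl fun x hx => ?_
    refine card_bij' (fun g _ => Fin.tail g) (fun g _ => Fin.cons x g) ?_ ?_ ?_ ?_
    · intro g hg
      simp only [mem_filter] at hg ⊢
      obtain ⟨⟨hg, hsum⟩, rfl⟩ := hg
      rw [← Fin.cons_self_tail g, cons_mem_tails] at hg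
      rw [← Fin.cons_self_tail g, Fin.sum_cons] at hsum
      exact ⟨hg.2.2, hsum⟩
    · intro g hg
      simp only [mem_filter] at hg hx ⊢
      rw [cons_mem_tails, Fin.sum_cons, Fin.cons_zero]
      exact ⟨⟨⟨ha, hx.2, hg.1⟩, hg.2⟩, rfl⟩
    · intro g hg
      rw [← (mem_filter.1 hg).2]
      exact Fin.cons_self_tail g
    · intro g _
      exact Fin.tail_cons _ _
  · intro g hg
    rw [mem_coe, mem_filter, ← Fin.cons_self_tail g, cons_mem_tails] at hg
    have hle := nextLabel_le_two_iff.1 (le_two_of_mem_tails hg.1.2.2)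
    simp only [coe_filter, mem_range, Set.mem_ofPred_eq]
    exact ⟨by omega, hg.1.2.1⟩

def minWeight (a L : ℕ) : ℕ := (2 * L + 4 - 2 * a) / 3

lemma minWeight_one (n : ℕ) : minWeight 1 n = (2 * n + 2) / 3 := by
  unfold minWeight
  omega

lemma minWeight_succ_le {a x : ℕ} (L : ℕ) (ha : a ≤ 2) (hx : x ≤ 2) (hx₀ : a = 0 → x = 2) :
    minWeight a (L + 1) ≤ x + minWeight (nextLabel a x) L := by
  unfold minWeight nextLabel
  split_ifs <;> omega

lemma minWeight_le_sum {a L : ℕ} {g : Fin L → ℕ} (hg : g ∈ tails a L) :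
    minWeight a L ≤ ∑ i, g i := by
  induction L generalizing a with
  | zero =>
    rw [mem_tails, isRDF_pathGraph_one] at hg
    unfold minWeight
    omega
  | succ L ih =>
    rw [← Fin.cons_self_tail g, cons_mem_tails] at hg
    obtain ⟨ha, hx₀, hg⟩ := hg
    have hx := nextLabel_le_two_iff.1 (le_two_of_mem_tails hg)
    rw [← Fin.cons_self_tail g, Fin.sum_cons]
    exact (minWeight_succ_le L ha hx hx₀).trans (by gcongr; exact ih hg)

def minCount (a L : ℕ) : ℕ :=
  match a, L % 3 with
  | 0, 0 => L / 3
  | 0, 1 => (L / 3 + 2).choose 2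
  | 0, _ => 1
  | 1, 0 => 1
  | 1, 1 => L / 3 + 1
  | 1, _ => (L / 3 + 3).choose 2
  | _, 0 => (L / 3 + 2).choose 2
  | _, 1 => 1
  | _, _ => L / 3 + 1

lemma minCount_one_pos (n : ℕ) : 0 < minCount 1 n := by
  unfold minCount
  split <;> first | omega | exact Nat.choose_pos (by omega)

lemma minCount_succ {a : ℕ} (L : ℕ) (ha : a ≤ 2) :
    ∑ x ∈ range 3 with (a = 0 → x = 2),
        (if x + minWeight (nextLabel a x) L = minWeight a (L + 1)
          then minCount (nextLabel a x) L else 0) = minCount a (L + 1) := by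
  obtain ⟨q, r, hr, rfl⟩ : ∃ q r, r < 3 ∧ L = 3 * q + r :=
    ⟨L / 3, L % 3, L.mod_lt (by norm_num), (Nat.div_add_mod L 3).symm⟩
  have hchoose : (q + 3).choose 2 = (q + 2).choose 2 + (q + 2) := by
    rw [Nat.choose_succ_succ', Nat.choose_one_right, add_comm]
  have h₁ : 3 * q + 1 + 1 = 3 * q + 2 := rfl
  have h₂ : 3 * q + 2 + 1 = 3 * (q + 1) := by ring
  interval_cases a <;> interval_cases r <;>
    simp [sum_range_succ, minCount, minWeight, nextLabel, hchoose, h₁, h₂, Nat.mul_add_div] <;>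
    (try split_ifs) <;> omega

lemma card_minimal_tails {a : ℕ} (L : ℕ) (ha : a ≤ 2) :
    #{g ∈ tails a L | ∑ i, g i = minWeight a L} = minCount a L := by
  induction L generalizing a with
  | zero =>
    rw [tails_zero]
    interval_cases a <;> simp [minWeight, minCount]
  | succ L ih =>
    rw [card_filter_tails_succ ha, ← minCount_succ L ha]
    refine sum_congr rfl fun x hx => ?_
    rw [mem_filter, mem_range] at hx
    have hx' : nextLabel a x ≤ 2 := nextLabel_le_two_iff.2 (by omega)
    exact card_filter_add_eq_ite (fun g => minWeight_le_sum) (ih hx')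
      (minWeight_succ_le L ha (by omega) hx.2)

end PathRDF

open PathRDF in
theorem gammaR_pathGraph (n : ℕ) : gammaR (pathGraph n) = (2 * n + 2) / 3 := by
  rw [gammaR, ← minWeight_one]
  refine IsLeast.csInf_eq ⟨?_, ?_⟩
  · have hcard := card_minimal_tails (a := 1) n (by norm_num)
    obtain ⟨f, hf⟩ := card_pos.1 (hcard ▸ minCount_one_pos n)
    rw [mem_filter, mem_tails_one] at hf
    exact ⟨f, hf⟩
  · rintro w ⟨f, hf, rfl⟩
    exact minWeight_le_sum (mem_tails_one.2 hf)

open PathRDF in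
theorem ncard_isMinRDF_pathGraph (n : ℕ) :
    {f | IsMinRDF (pathGraph n) f}.ncard = minCount 1 n := by
  have hset : {f | IsMinRDF (pathGraph n) f} = ↑{g ∈ tails 1 n | ∑ i, g i = minWeight 1 n} := by
    ext f
    rw [Set.mem_ofPred_eq, IsMinRDF, gammaR_pathGraph, ← minWeight_one, coe_filter,
      Set.mem_ofPred_eq, mem_tails_one]
  rw [hset, Set.ncard_coe_finset, card_minimal_tails n (by norm_num)]

theorem path_minRDF_count_mod_two (n : ℕ) (hn : n % 3 = 2) :
    {f | IsMinRDF (SimpleGraph.pathGraph n) f}.ncard = (n + 4) * (n + 7) / 18 := by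
  obtain ⟨k, rfl⟩ : ∃ k, n = 3 * k + 2 := ⟨n / 3, by omega⟩
  rw [ncard_isMinRDF_pathGraph]
  calc PathRDF.minCount 1 (3 * k + 2) = (k + 3).choose 2 := by
        simp [PathRDF.minCount, Nat.mul_add_div]
    _ = (k + 3) * (k + 2) / 2 := Nat.choose_two_right _
    _ = 9 * ((k + 3) * (k + 2)) / (9 * 2) := (Nat.mul_div_mul_left _ _ (by norm_num)).symm
    _ = (3 * k + 2 + 4) * (3 * k + 2 + 7) / 18 := by ring_nf
end
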